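/- arXiv:2308.07742 — 2 statements merged into one kernel-verified Lean document; each statement's English description precedes it below -/
import Mathlib

section
/- Let W : ℝ² → ℝ² be continuously differentiable with compact support, let Δ ⊂ ℝ² be a bounded measurable set, let ν ∈ ℝ, and let v : ℝ × ℝ² → ℝ² be twice continuously differentiable. Write v = v(0, ·), v̇(x) = d/dt|_{t=0} v(t, F_t(x)), and ∇ for the spatial Jacobian. Then the map t ↦ ∫_{F_t(Δ)} (ν/2) ∇v(t,·)(y) : ∇v(t,·)(y) dy is differentiable at t = 0 and its derivative equals ∫_Δ [ ν ∇v̇(x) : ∇v(x) − ν (∇v(x) ∇W(x)) : ∇v(x) + div W(x) · (ν/2) ∇v(x) : ∇v(x) ] dx. -/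
/-!
For small `t` the map `F_t = id + t • W` is injective, being a Lipschitz perturbation of the
identity, and `det (I + t ∇W) = 1 + t tr ∇W + t² det ∇W` is positive on the compact closure of `Δ`.
The change of variables formula therefore pulls the integral back to the fixed domain `Δ`, with
integrand `det (I + t ∇W(x)) · e(t, F_t x)` where `e` is the energy density. This integrand is
differentiable in `t` with a derivative jointly continuous in `(t, x)`, so it can be differentiated
under the integral sign. At `t = 0` the determinant contributes `div W · e`, and, by symmetry of
the second derivative of `v`, the material derivative of `∇v(t, ·)` along the flow is
`∇v̇ - ∇v ∇W`, which produces the remaining two terms.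
-/

open MeasureTheory

/-- Jacobian matrix of a vector field on `ℝ²`: `(jac v x) i j = ∂ v_i / ∂ x_j`. -/
noncomputable def jac (v : EuclideanSpace ℝ (Fin 2) → EuclideanSpace ℝ (Fin 2))
    (x : EuclideanSpace ℝ (Fin 2)) : Matrix (Fin 2) (Fin 2) ℝ :=
  Matrix.of fun i j => fderiv ℝ v x (EuclideanSpace.single j (1 : ℝ)) i

/-- Divergence of a vector field: the trace of its Jacobian. -/
noncomputable def divg (v : EuclideanSpace ℝ (Fin 2) → EuclideanSpace ℝ (Fin 2))
    (x : EuclideanSpace ℝ (Fin 2)) : ℝ :=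
  Matrix.trace (jac v x)

/-- Frobenius inner product of matrices: `A : B = ∑_{j,k} A_{jk} B_{jk}`. -/
def frob (A B : Matrix (Fin 2) (Fin 2) ℝ) : ℝ :=
  ∑ j, ∑ k, A j k * B j k

open Filter Topology Function
open scoped NNReal

theorem Matrix.det_one_add_smul_fin_two {R : Type*} [CommRing R] (M : Matrix (Fin 2) (Fin 2) R)
    (t : R) :
    (1 + t • M).det = 1 + t * M.trace + t ^ 2 * M.det := by
  simp only [Matrix.det_fin_two, Matrix.trace_fin_two, Matrix.add_apply, Matrix.smul_apply,
    Matrix.one_apply_eq, Matrix.one_apply_ne (by decide : (0 : Fin 2) ≠ 1),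
    Matrix.one_apply_ne (by decide : (1 : Fin 2) ≠ 0), smul_eq_mul]
  ring

theorem hasDerivAt_setIntegral_of_continuous {X E : Type*} [TopologicalSpace X]
    [MeasurableSpace X] [OpensMeasurableSpace X] [NormedAddCommGroup E] [NormedSpace ℝ E]
    [SecondCountableTopologyEither X E]
    {μ : Measure X} [IsFiniteMeasureOnCompacts μ] {s : Set X} (hs : IsCompact (closure s))
    {f f' : ℝ → X → E} (hf : Continuous (uncurry f)) (hf' : Continuous (uncurry f'))
    (hderiv : ∀ t x, HasDerivAt (f · x) (f' t x) t) (t₀ : ℝ) :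
    HasDerivAt (fun t => ∫ x in s, f t x ∂μ) (∫ x in s, f' t₀ x ∂μ) t₀ := by
  have hslice : ∀ {g : ℝ → X → E}, Continuous (uncurry g) → ∀ t, Continuous (g t) :=
    fun hg t => hg.comp (Continuous.prodMk_right t)
  obtain ⟨C, hC⟩ := (isCompact_Icc.prod hs).exists_bound_of_continuousOn
    (s := Set.Icc (t₀ - 1) (t₀ + 1) ×ˢ closure s) hf'.continuousOn
  have hbound : ∀ᵐ x ∂μ.restrict s, ∀ t ∈ Metric.ball t₀ 1, ‖f' t x‖ ≤ C := by
    filter_upwards [ae_restrict_of_ae_restrict_of_subset subset_closure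
      (ae_restrict_mem isClosed_closure.measurableSet)] with x hx t ht
    rw [Metric.mem_ball, Real.dist_eq, abs_lt] at ht
    exact hC (t, x) ⟨⟨by linarith, by linarith⟩, hx⟩
  have hint : IntegrableOn (f t₀) s μ :=
    ((hslice hf t₀).continuousOn.integrableOn_compact' hs isClosed_closure.measurableSet).mono_set
      subset_closure
  have hμs : μ s ≠ ⊤ := ((measure_mono subset_closure).trans_lt hs.measure_lt_top).ne
  exact (hasDerivAt_integral_of_dominated_loc_of_deriv_le (Metric.ball_mem_nhds t₀ one_pos)
    (.of_forall fun t => (hslice hf t).aestronglyMeasurable) hint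
    (hslice hf' t₀).aestronglyMeasurable hbound (integrableOn_const hμs)
    (.of_forall fun x t _ => hderiv t x)).2

theorem eventually_injective_add_smul {E : Type*} [NormedAddCommGroup E] [NormedSpace ℝ E]
    {W : E → E} {K : ℝ≥0} (hW : LipschitzWith K W) :
    ∀ᶠ t in 𝓝 (0 : ℝ), Injective fun x => x + t • W x := by
  have hsmall : ∀ᶠ t in 𝓝 (0 : ℝ), ‖t‖₊ * K < 1 := by
    refine (Continuous.tendsto (by fun_prop : Continuous fun t : ℝ => ‖t‖₊ * K) 0).eventually
      (gt_mem_nhds ?_)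
    simp
  filter_upwards [hsmall] with t ht
  exact (AntilipschitzWith.id.add_lipschitzWith ((lipschitzWith_smul t).comp hW)
    (by simpa using ht)).injective

section Flow

variable {E F : Type*} [NormedAddCommGroup E] [NormedSpace ℝ E]
  [NormedAddCommGroup F] [NormedSpace ℝ F]

theorem hasFDerivAt_slice {g : ℝ × E → F} {t : ℝ} {y : E} (hg : DifferentiableAt ℝ g (t, y)) :
    HasFDerivAt (fun z => g (t, z)) ((fderiv ℝ g (t, y)).comp (ContinuousLinearMap.inr ℝ ℝ E)) y :=
  hg.hasFDerivAt.comp y (hasFDerivAt_prodMk_right t y)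

theorem hasDerivAt_comp_flow {g : ℝ × E → F} {x w : E} {t : ℝ}
    (hg : DifferentiableAt ℝ g (t, x + t • w)) :
    HasDerivAt (fun s : ℝ => g (s, x + s • w)) (fderiv ℝ g (t, x + t • w) (1, w)) t :=
  hg.hasFDerivAt.comp_hasDerivAt t <|
    (hasDerivAt_id t).prodMk (by simpa using ((hasDerivAt_id t).smul_const w).const_add x)

noncomputable def materialDeriv (W : E → E) (v : ℝ × E → F) (z : E) : F :=
  deriv (fun t : ℝ => v (t, z + t • W z)) 0

theorem materialDeriv_eq {W : E → E} {v : ℝ × E → F} (hv : Differentiable ℝ v) :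
    materialDeriv W v = fun z => fderiv ℝ v (0, z) (1, W z) := by
  funext z
  simpa [materialDeriv] using (hasDerivAt_comp_flow (w := W z) (hv (0, z + (0 : ℝ) • W z))).deriv

end Flow

namespace ShapeDerivative

local notation "E²" => EuclideanSpace ℝ (Fin 2)

theorem jac_slice_apply {v : ℝ × E² → E²} {t : ℝ} {y : E²} (hv : DifferentiableAt ℝ v (t, y))
    (i j : Fin 2) :
    jac (fun z => v (t, z)) y i j = fderiv ℝ v (t, y) (0, EuclideanSpace.single j 1) i := by
  simp [jac, (hasFDerivAt_slice hv).fderiv]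

theorem jac_eq_toMatrix (u : E² → E²) (x : E²) :
    jac u x = LinearMap.toMatrix (EuclideanSpace.basisFun (Fin 2) ℝ).toBasis
      (EuclideanSpace.basisFun (Fin 2) ℝ).toBasis (fderiv ℝ u x) := by
  ext i j
  simp [jac, LinearMap.toMatrix_apply]

theorem jac_mul_jac_apply (f g : E² → E²) (x y : E²) (i j : Fin 2) :
    (jac f y * jac g x) i j = fderiv ℝ f y (fderiv ℝ g x (EuclideanSpace.single j 1)) i := by
  rw [jac_eq_toMatrix, jac_eq_toMatrix, ← LinearMap.toMatrix_comp]
  simp [LinearMap.toMatrix_apply]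

theorem jac_materialDeriv_apply {W : E² → E²} {v : ℝ × E² → E²} (hW : Differentiable ℝ W)
    (hv : ContDiff ℝ 2 v) (x : E²) (i j : Fin 2) :
    jac (materialDeriv W v) x i j
      = fderiv ℝ (fderiv ℝ v) (0, x) (1, W x) (0, EuclideanSpace.single j 1) i
        + (jac (fun z => v (0, z)) x * jac W x) i j := by
  have hv' : Differentiable ℝ (fderiv ℝ v) :=
    (hv.fderiv_right (m := 1) (by norm_num)).differentiable one_ne_zero
  have hdir : HasFDerivAt (fun z => ((1 : ℝ), W z)) ((0 : E² →L[ℝ] ℝ).prod (fderiv ℝ W x)) x :=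
    (hasFDerivAt_const 1 x).prodMk (hW x).hasFDerivAt
  have hsymm := (hv.contDiffAt (x := (0, x)).isSymmSndFDerivAt (by simp)).eq
    (0, EuclideanSpace.single j 1) (1, W x)
  rw [materialDeriv_eq (hv.differentiable (by simp)), jac_mul_jac_apply,
    (hasFDerivAt_slice (hv.differentiable (by simp) (0, x))).fderiv]
  simp [jac, ((hasFDerivAt_slice (hv' (0, x))).clm_apply hdir).fderiv, hsymm, add_comm]

noncomputable def spatialJac (v : ℝ × E² → E²) (p : ℝ × E²) : Matrix (Fin 2) (Fin 2) ℝ :=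
  jac (fun z => v (p.1, z)) p.2

theorem hasDerivAt_spatialJac_flow_apply {W : E² → E²} {v : ℝ × E² → E²} (hW : Differentiable ℝ W)
    (hv : ContDiff ℝ 2 v) (x : E²) (i j : Fin 2) :
    HasDerivAt (fun t => spatialJac v (t, x + t • W x) i j)
      ((jac (materialDeriv W v) x - jac (fun z => v (0, z)) x * jac W x) i j) 0 := by
  have hv' : Differentiable ℝ (fderiv ℝ v) :=
    (hv.fderiv_right (m := 1) (by norm_num)).differentiable one_ne_zero
  have hflow := (hasDerivAt_comp_flow (t := 0) (x := x) (w := W x) (hv' _)).clm_apply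
    (hasDerivAt_const (0 : ℝ) ((0 : ℝ), EuclideanSpace.single j 1))
  have hentry := (EuclideanSpace.proj (𝕜 := ℝ) i).hasFDerivAt.comp_hasDerivAt 0 hflow
  rw [Matrix.sub_apply, jac_materialDeriv_apply hW hv, add_sub_cancel_right]
  simpa [Function.comp_def, spatialJac, jac_slice_apply (hv.differentiable (by simp) _)]
    using hentry

theorem frob_sub_left (A B C : Matrix (Fin 2) (Fin 2) ℝ) :
    frob (A - B) C = frob A C - frob B C := by
  simp [frob, sub_mul, Finset.sum_sub_distrib]

theorem hasDerivAt_frob_self {A : ℝ → Matrix (Fin 2) (Fin 2) ℝ} {A' : Matrix (Fin 2) (Fin 2) ℝ}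
    {t : ℝ} (hA : ∀ i j, HasDerivAt (fun s => A s i j) (A' i j) t) :
    HasDerivAt (fun s => frob (A s) (A s)) (2 * frob A' (A t)) t := by
  unfold frob
  rw [Finset.mul_sum]
  refine HasDerivAt.fun_sum fun i _ => ?_
  rw [Finset.mul_sum]
  refine HasDerivAt.fun_sum fun j _ => ?_
  exact ((hA i j).fun_mul (hA i j)).congr_deriv (by ring)

noncomputable def energyDensity (ν : ℝ) (v : ℝ × E² → E²) (p : ℝ × E²) : ℝ :=
  ν / 2 * frob (spatialJac v p) (spatialJac v p)

theorem hasDerivAt_energyDensity_flow {W : E² → E²} {v : ℝ × E² → E²} (ν : ℝ)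
    (hW : Differentiable ℝ W) (hv : ContDiff ℝ 2 v) (x : E²) :
    HasDerivAt (fun t => energyDensity ν v (t, x + t • W x))
      (ν * frob (jac (materialDeriv W v) x) (jac (fun z => v (0, z)) x)
        - ν * frob (jac (fun z => v (0, z)) x * jac W x) (jac (fun z => v (0, z)) x)) 0 := by
  have h := (hasDerivAt_frob_self (hasDerivAt_spatialJac_flow_apply hW hv x)).const_mul (ν / 2)
  simp only [spatialJac, zero_smul, add_zero, frob_sub_left] at h
  exact h.congr_deriv (by ring)

theorem contDiff_spatialJac_apply {v : ℝ × E² → E²} (hv : ContDiff ℝ 2 v) (i j : Fin 2) :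
    ContDiff ℝ 1 fun p => spatialJac v p i j := by
  have h : (fun p => spatialJac v p i j) = fun p => fderiv ℝ v p (0, EuclideanSpace.single j 1) i :=
    funext fun p => jac_slice_apply (hv.differentiable (by simp) _) i j
  rw [h]
  exact (EuclideanSpace.proj i).contDiff.comp
    ((hv.fderiv_right (m := 1) (by norm_num)).clm_apply contDiff_const)

theorem contDiff_energyDensity {v : ℝ × E² → E²} (ν : ℝ) (hv : ContDiff ℝ 2 v) :
    ContDiff ℝ 1 (energyDensity ν v) := by
  have h := contDiff_spatialJac_apply hv
  unfold energyDensity frob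
  fun_prop

noncomputable def flowJacDet (W : E² → E²) (t : ℝ) (x : E²) : ℝ :=
  (1 + t • jac W x).det

theorem det_id_add_smul_fderiv (W : E² → E²) (t : ℝ) (x : E²) :
    (ContinuousLinearMap.id ℝ E² + t • fderiv ℝ W x).det = flowJacDet W t x := by
  rw [flowJacDet, jac_eq_toMatrix, ContinuousLinearMap.det,
    ← LinearMap.det_toMatrix (EuclideanSpace.basisFun (Fin 2) ℝ).toBasis]
  simp only [ContinuousLinearMap.toLinearMap_add, ContinuousLinearMap.coe_id,
    ContinuousLinearMap.toLinearMap_smul, map_add, map_smul, LinearMap.toMatrix_id]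

theorem hasDerivAt_flowJacDet (W : E² → E²) (t : ℝ) (x : E²) :
    HasDerivAt (fun s => flowJacDet W s x) ((jac W x).trace + 2 * t * (jac W x).det) t := by
  simp only [flowJacDet, Matrix.det_one_add_smul_fin_two]
  exact ((((hasDerivAt_id t).mul_const _).const_add 1).add
    ((hasDerivAt_pow 2 t).mul_const _)).congr_deriv (by simp)

theorem continuous_jac {W : E² → E²} (hW : ContDiff ℝ 1 W) : Continuous (jac W) :=
  continuous_pi fun i => continuous_pi fun _ => (EuclideanSpace.proj i).continuous.comp
    ((hW.continuous_fderiv one_ne_zero).clm_apply continuous_const)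

theorem continuous_flowJacDet {W : E² → E²} (hW : ContDiff ℝ 1 W) :
    Continuous (uncurry (flowJacDet W)) :=
  (continuous_const.add (continuous_fst.smul ((continuous_jac hW).comp continuous_snd))).matrix_det

theorem eventually_flowJacDet_pos {W : E² → E²} (hW : ContDiff ℝ 1 W) {K : Set E²}
    (hK : IsCompact K) : ∀ᶠ t in 𝓝 0, ∀ x ∈ K, 0 < flowJacDet W t x :=
  hK.eventually_forall_of_forall_eventually fun x _ =>
    continuousAt_const.eventually_lt (continuous_flowJacDet hW).continuousAt (by simp [flowJacDet])

theorem setIntegral_image_flow {W : E² → E²} (hW : Differentiable ℝ W) {Δ : Set E²}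
    (hΔ : MeasurableSet Δ) {t : ℝ} (hinj : Set.InjOn (fun x => x + t • W x) Δ)
    (hpos : ∀ x ∈ Δ, 0 < flowJacDet W t x) (g : E² → ℝ) :
    ∫ y in (fun x => x + t • W x) '' Δ, g y = ∫ x in Δ, flowJacDet W t x * g (x + t • W x) := by
  have hflow (x : E²) : HasFDerivAt (fun x => x + t • W x)
      (ContinuousLinearMap.id ℝ E² + t • fderiv ℝ W x) x :=
    (hasFDerivAt_id x).add ((hW x).hasFDerivAt.const_smul t)
  rw [integral_image_eq_integral_abs_det_fderiv_smul volume hΔ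
    (fun x _ => (hflow x).hasFDerivWithinAt) hinj]
  refine setIntegral_congr_fun hΔ fun x hx => ?_
  rw [det_id_add_smul_fderiv, abs_of_pos (hpos x hx), smul_eq_mul]

noncomputable def energyPullback (W : E² → E²) (v : ℝ × E² → E²) (ν t : ℝ) (x : E²) : ℝ :=
  flowJacDet W t x * energyDensity ν v (t, x + t • W x)

noncomputable def energyPullbackDeriv (W : E² → E²) (v : ℝ × E² → E²) (ν t : ℝ) (x : E²) : ℝ :=
  ((jac W x).trace + 2 * t * (jac W x).det) * energyDensity ν v (t, x + t • W x)
    + flowJacDet W t x * fderiv ℝ (energyDensity ν v) (t, x + t • W x) (1, W x)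

theorem hasDerivAt_energyPullback {W : E² → E²} {v : ℝ × E² → E²} (ν : ℝ) (hv : ContDiff ℝ 2 v)
    (t : ℝ) (x : E²) :
    HasDerivAt (energyPullback W v ν · x) (energyPullbackDeriv W v ν t x) t :=
  (hasDerivAt_flowJacDet W t x).mul
    (hasDerivAt_comp_flow ((contDiff_energyDensity ν hv).differentiable one_ne_zero _))

theorem continuous_energyPullback {W : E² → E²} {v : ℝ × E² → E²} (ν : ℝ) (hW : ContDiff ℝ 1 W)
    (hv : ContDiff ℝ 2 v) :
    Continuous (uncurry (energyPullback W v ν)) := by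
  have hG := (contDiff_energyDensity ν hv).continuous
  have hJ := continuous_flowJacDet hW
  have hW' := hW.continuous
  unfold energyPullback
  fun_prop

theorem continuous_energyPullbackDeriv {W : E² → E²} {v : ℝ × E² → E²} (ν : ℝ)
    (hW : ContDiff ℝ 1 W) (hv : ContDiff ℝ 2 v) :
    Continuous (uncurry (energyPullbackDeriv W v ν)) := by
  have hG := (contDiff_energyDensity ν hv).continuous
  have hG' := (contDiff_energyDensity ν hv).continuous_fderiv one_ne_zero
  have hJ := continuous_flowJacDet hW
  have hjac := continuous_jac hW
  have hW' := hW.continuous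
  unfold energyPullbackDeriv
  fun_prop

theorem energyPullbackDeriv_zero {W : E² → E²} {v : ℝ × E² → E²} (ν : ℝ)
    (hW : Differentiable ℝ W) (hv : ContDiff ℝ 2 v) (x : E²) :
    energyPullbackDeriv W v ν 0 x =
      ν * frob (jac (materialDeriv W v) x) (jac (fun z => v (0, z)) x)
        - ν * frob (jac (fun z => v (0, z)) x * jac W x) (jac (fun z => v (0, z)) x)
        + divg W x * (ν / 2 * frob (jac (fun z => v (0, z)) x) (jac (fun z => v (0, z)) x)) := by
  have hflow := (hasDerivAt_comp_flow (t := 0) (x := x) (w := W x)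
    ((contDiff_energyDensity ν hv).differentiable one_ne_zero _)).unique
    (hasDerivAt_energyDensity_flow ν hW hv x)
  simp only [zero_smul, add_zero] at hflow
  simp only [energyPullbackDeriv, zero_smul, add_zero, hflow]
  simp only [mul_zero, zero_mul, add_zero, energyDensity, spatialJac, flowJacDet, zero_smul,
    Matrix.det_one, one_mul, divg]
  ring

end ShapeDerivative

open ShapeDerivative in
/-- Shape derivative of the dissipated-energy term
`t ↦ ∫_{F_t(Δ)} (ν/2) ∇v(t,·) : ∇v(t,·) dy`. -/
theorem shape_derivative_L1
    (W : EuclideanSpace ℝ (Fin 2) → EuclideanSpace ℝ (Fin 2))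
    (hW : ContDiff ℝ 1 W) (hWc : HasCompactSupport W)
    (Δ : Set (EuclideanSpace ℝ (Fin 2))) (hΔm : MeasurableSet Δ)
    (hΔb : Bornology.IsBounded Δ) (ν : ℝ)
    (v : ℝ × EuclideanSpace ℝ (Fin 2) → EuclideanSpace ℝ (Fin 2)) (hv : ContDiff ℝ 2 v)
    (v₀ vdot : EuclideanSpace ℝ (Fin 2) → EuclideanSpace ℝ (Fin 2))
    (hv₀ : v₀ = fun z => v ((0 : ℝ), z))
    (hvdot : vdot = fun z => deriv (fun t : ℝ => v (t, z + t • W z)) 0) :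
    HasDerivAt
      (fun t : ℝ => ∫ y in (fun x => x + t • W x) '' Δ,
        (ν / 2) * frob (jac (fun z => v (t, z)) y) (jac (fun z => v (t, z)) y))
      (∫ x in Δ,
        (ν * frob (jac vdot x) (jac v₀ x)
          - ν * frob (jac v₀ x * jac W x) (jac v₀ x)
          + divg W x * ((ν / 2) * frob (jac v₀ x) (jac v₀ x)))) (0 : ℝ) := by
  subst hv₀ hvdot
  have hW₁ : Differentiable ℝ W := hW.differentiable one_ne_zero
  obtain ⟨K, hK⟩ := hW.lipschitzWith_of_hasCompactSupport hWc one_ne_zero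
  have hΔc : IsCompact (closure Δ) := hΔb.isCompact_closure
  have hpullback : (fun t => ∫ y in (fun x => x + t • W x) '' Δ, energyDensity ν v (t, y))
      =ᶠ[𝓝 0] fun t => ∫ x in Δ, energyPullback W v ν t x := by
    filter_upwards [eventually_injective_add_smul hK, eventually_flowJacDet_pos hW hΔc]
      with t hinj hpos
    exact setIntegral_image_flow hW₁ hΔm hinj.injOn (fun x hx => hpos x (subset_closure hx)) _
  have hderiv := hasDerivAt_setIntegral_of_continuous (μ := volume) hΔc
    (continuous_energyPullback ν hW hv) (continuous_energyPullbackDeriv ν hW hv)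
    (hasDerivAt_energyPullback ν hv) 0
  simp only [energyPullbackDeriv_zero ν hW₁ hv] at hderiv
  exact hderiv.congr_of_eventuallyEq hpullback
end

section
/- Let W : ℝ² → ℝ² be continuously differentiable with compact support, let Δ ⊂ ℝ² be a bounded measurable set, and let v, φ : ℝ × ℝ² → ℝ² be twice continuously differentiable. Write v = v(0, ·), φ = φ(0, ·), v̇(x) = d/dt|_{t=0} v(t, F_t(x)), φ̇(x) = d/dt|_{t=0} φ(t, F_t(x)). Then the map t ↦ ∫_{F_t(Δ)} ((v(t,·)(y) · ∇) v(t,·)(y)) · φ(t,·)(y) dy is differentiable at t = 0 and its derivative equals ∫_Δ [ ((v̇(x) · ∇)v(x)) · φ(x) + ((v(x) · ∇)v̇(x)) · φ(x) − (((∇W(x) v(x)) · ∇)v(x)) · φ(x) + ((v(x) · ∇)v(x)) · φ̇(x) + div W(x) · ((v(x) · ∇)v(x)) · φ(x) ] dx. -/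
/-!
Substitute `y = x + t W(x)`. For small `|t|` this map is injective on `Δ` (`W` is Lipschitz on
the compact set `closure Δ`) and its Jacobian `det (1 + t DW)` is positive, so the integral equals
`∫_Δ det (1 + t DW(x)) f(t, x + t W(x)) dx`, which is differentiated under the integral sign;
`d/dt det (1 + t DW)` at `0` is `tr DW = div W`. The material derivative of the integrand
`f = ((v · ∇) v) · φ` follows from the product rule, and the symmetry of `D²v` turns the
derivative of `∇v` along the flow into `∇v̇ - ∇v ∇W`.
-/

open MeasureTheory
open scoped RealInnerProductSpace

/-- Convective derivative `(a · ∇)v` at `x`, i.e. `∇v(x) a`. -/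
noncomputable def conv (a : EuclideanSpace ℝ (Fin 2))
    (v : EuclideanSpace ℝ (Fin 2) → EuclideanSpace ℝ (Fin 2))
    (x : EuclideanSpace ℝ (Fin 2)) : EuclideanSpace ℝ (Fin 2) :=
  fderiv ℝ v x a

open Filter Set Topology

namespace ContinuousLinearMap

variable {E : Type*} [NormedAddCommGroup E] [NormedSpace ℝ E] [FiniteDimensional ℝ E]

theorem contDiff_det {n : WithTop ℕ∞} : ContDiff ℝ n (fun A : E →L[ℝ] E => A.det) := by
  let b := Module.finBasis ℝ E
  let toMat : (E →L[ℝ] E) →L[ℝ] (Fin (Module.finrank ℝ E) → Fin (Module.finrank ℝ E) → ℝ) :=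
    LinearMap.toContinuousLinearMap ((LinearMap.toMatrix b b).toLinearMap ∘ₗ coeLM ℝ)
  have hdet : (fun A : E →L[ℝ] E => A.det) = (fun M => (Matrix.of M).det) ∘ toMat := by
    funext A
    exact (LinearMap.det_toMatrix b A).symm
  have hmat : ContDiff ℝ n (fun M : Fin (Module.finrank ℝ E) → Fin (Module.finrank ℝ E) → ℝ =>
      (Matrix.of M).det) := by
    simp only [Matrix.det_apply, Matrix.of_apply]
    fun_prop
  rw [hdet]
  exact hmat.comp toMat.contDiff

theorem hasDerivAt_det_one_add_smul (A : E →L[ℝ] E) :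
    HasDerivAt (fun t : ℝ => (1 + t • A).det) (LinearMap.trace ℝ E A) 0 := by
  let b := Module.finBasis ℝ E
  set M := LinearMap.toMatrix b b A
  set p := (Matrix.det (1 + (Polynomial.X : Polynomial ℝ) • M.map Polynomial.C)).divX.divX
  have hexp : ∀ t : ℝ, (1 + t • A).det = 1 + M.trace * t + p.eval t * t ^ 2 := by
    intro t
    rw [← Matrix.det_one_add_smul, ContinuousLinearMap.det, ← LinearMap.det_toMatrix b]
    simp [M]
  rw [LinearMap.trace_eq_matrix_trace ℝ b, funext hexp]
  have hlin : HasDerivAt (fun t : ℝ => 1 + M.trace * t) M.trace 0 := by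
    simpa using ((hasDerivAt_id (0 : ℝ)).const_mul M.trace).const_add 1
  have hquad : HasDerivAt (fun t : ℝ => p.eval t * t ^ 2) 0 0 := by
    simpa using (p.hasDerivAt 0).fun_mul (hasDerivAt_pow 2 (0 : ℝ))
  simpa using hlin.fun_add hquad

theorem fderiv_det_one_apply (A : E →L[ℝ] E) :
    fderiv ℝ (fun B : E →L[ℝ] E => B.det) 1 A = LinearMap.trace ℝ E A := by
  have hline : HasDerivAt (fun t : ℝ => 1 + t • A) A 0 := by
    simpa using ((hasDerivAt_id (0 : ℝ)).smul_const A).const_add 1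
  have hdet : HasFDerivAt (fun B : E →L[ℝ] E => B.det)
      (fderiv ℝ (fun B : E →L[ℝ] E => B.det) 1) 1 :=
    ((contDiff_det (n := 1)).differentiable one_ne_zero 1).hasFDerivAt
  exact (hdet.comp_hasDerivAt_of_eq 0 hline (by simp)).unique (hasDerivAt_det_one_add_smul A)

end ContinuousLinearMap

theorem hasDerivAt_setIntegral_of_continuous_deriv {X F : Type*} [TopologicalSpace X]
    [MeasurableSpace X] [OpensMeasurableSpace X] [NormedAddCommGroup F] [NormedSpace ℝ F]
    {μ : Measure X} [IsFiniteMeasureOnCompacts μ] {K s : Set X} (hK : IsCompact K)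
    (hs : MeasurableSet s) (hsK : s ⊆ K) {G G' : ℝ → X → F}
    (hG : Continuous (Function.uncurry G)) (hG' : Continuous (Function.uncurry G'))
    (hder : ∀ t x, HasDerivAt (G · x) (G' t x) t) (t₀ : ℝ) :
    HasDerivAt (fun t => ∫ x in s, G t x ∂μ) (∫ x in s, G' t₀ x ∂μ) t₀ := by
  have hμs : μ s ≠ ⊤ := ((measure_mono hsK).trans_lt hK.measure_lt_top).ne
  have : IsFiniteMeasure (μ.restrict s) := ⟨by simpa using hμs.lt_top⟩
  have hslice : ∀ {H : ℝ → X → F}, Continuous (Function.uncurry H) → ∀ t,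
      IntegrableOn (H t) s μ := fun {H} hH t =>
    (show Continuous (H t) from hH.comp (Continuous.prodMk_right t)).continuousOn
      |>.integrableOn_of_subset_isCompact hK hs hsK hμs
  obtain ⟨C, hC⟩ := ((isCompact_closedBall t₀ 1).prod hK).exists_bound_of_continuousOn
    hG'.continuousOn
  refine (hasDerivAt_integral_of_dominated_loc_of_deriv_le (bound := fun _ => C)
    (Metric.closedBall_mem_nhds t₀ one_pos)
    (Eventually.of_forall fun t => (hslice hG t).aestronglyMeasurable) (hslice hG t₀)
    (hslice hG' t₀).aestronglyMeasurable ?_ (integrable_const C)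
    (Eventually.of_forall fun x t _ => hder t x)).2
  filter_upwards [ae_restrict_mem hs] with x hx t ht using hC (t, x) ⟨ht, hsK hx⟩

section Transport

variable {E F : Type*} [NormedAddCommGroup E] [NormedSpace ℝ E]
  [NormedAddCommGroup F] [NormedSpace ℝ F]

theorem LipschitzOnWith.injOn_add_smul {W : E → E} {L : NNReal} {s : Set E}
    (hW : LipschitzOnWith L W s) {t : ℝ} (ht : |t| * L < 1) :
    InjOn (fun x => x + t • W x) s := by
  intro x hx y hy hxy
  by_contra hne
  have hdiff : x - y = t • (W y - W x) := by
    linear_combination (norm := module) (hxy : x + t • W x = y + t • W y)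
  have hpos : 0 < ‖x - y‖ := norm_pos_iff.2 (sub_ne_zero.2 hne)
  have hle : ‖x - y‖ ≤ |t| * L * ‖x - y‖ := by
    calc ‖x - y‖ = |t| * dist (W y) (W x) := by
          rw [hdiff, norm_smul, Real.norm_eq_abs, dist_eq_norm]
      _ ≤ |t| * (L * dist y x) := by gcongr; exact hW.dist_le_mul y hy x hx
      _ = |t| * L * ‖x - y‖ := by rw [dist_comm, dist_eq_norm]; ring
  nlinarith

theorem ContDiff.eventually_injOn_add_smul [ProperSpace E] {W : E → E} (hW : ContDiff ℝ 1 W)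
    {K : Set E} (hK : IsCompact K) : ∀ᶠ t in 𝓝 (0 : ℝ), InjOn (fun x => x + t • W x) K := by
  obtain ⟨L, hL⟩ := hW.locallyLipschitz.locallyLipschitzOn.exists_lipschitzOnWith_of_compact hK
  have hsmall : ∀ᶠ t : ℝ in 𝓝 0, |t| * (L : ℝ) < 1 :=
    (continuous_abs.mul continuous_const).continuousAt.eventually_lt continuousAt_const
      (by simp)
  exact hsmall.mono fun t ht => hL.injOn_add_smul ht

theorem hasDerivAt_comp_add_smul {f : ℝ × E → F} {W : E → E} {x : E} {t : ℝ}
    (hf : DifferentiableAt ℝ f (t, x + t • W x)) :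
    HasDerivAt (fun s => f (s, x + s • W x)) (fderiv ℝ f (t, x + t • W x) (1, W x)) t := by
  have hcurve : HasDerivAt (fun s : ℝ => (s, x + s • W x)) (1, W x) t :=
    (hasDerivAt_id t).prodMk (by simpa using ((hasDerivAt_id t).smul_const (W x)).const_add x)
  exact hf.hasFDerivAt.comp_hasDerivAt t hcurve

theorem deriv_comp_add_smul_zero {f : ℝ × E → F} (hf : Differentiable ℝ f) (W : E → E) (x : E) :
    deriv (fun t => f (t, x + t • W x)) 0 = fderiv ℝ f (0, x) (1, W x) := by
  simpa using (hasDerivAt_comp_add_smul (hf _) (t := 0)).deriv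

theorem fderiv_fderiv_apply_eq_fderiv_sub {v : ℝ × E → F} (hv : ContDiff ℝ 2 v) {W : E → E}
    {x : E} (hW : DifferentiableAt ℝ W x) (t : ℝ) (a : E) :
    fderiv ℝ (fderiv ℝ v) (t, x) (1, W x) (0, a)
      = fderiv ℝ (fun z => fderiv ℝ v (t, z) (1, W z)) x a
        - fderiv ℝ v (t, x) (0, fderiv ℝ W x a) := by
  have hD2v : HasFDerivAt (fderiv ℝ v) (fderiv ℝ (fderiv ℝ v) (t, x)) (t, x) :=
    (((hv.fderiv_right (by norm_num)).differentiable one_ne_zero) _).hasFDerivAt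
  have hslice : HasFDerivAt (fun z => fderiv ℝ v (t, z))
      ((fderiv ℝ (fderiv ℝ v) (t, x)).comp (ContinuousLinearMap.inr ℝ ℝ E)) x :=
    hD2v.comp x (hasFDerivAt_prodMk_right t x)
  have hdir : HasFDerivAt (fun z => ((1 : ℝ), W z)) ((0 : E →L[ℝ] ℝ).prod (fderiv ℝ W x)) x :=
    (hasFDerivAt_const 1 x).prodMk hW.hasFDerivAt
  have hsymm : fderiv ℝ (fderiv ℝ v) (t, x) (0, a) (1, W x)
      = fderiv ℝ (fderiv ℝ v) (t, x) (1, W x) (0, a) :=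
    second_derivative_symmetric (fun y => ((hv.differentiable two_ne_zero) y).hasFDerivAt) hD2v _ _
  rw [(hslice.clm_apply hdir).fderiv]
  simp [hsymm]

theorem ContDiff.eventually_forall_det_pos {W : E → E} (hW : ContDiff ℝ 1 W) {K : Set E}
    (hK : IsCompact K) : ∀ᶠ t in 𝓝 (0 : ℝ), ∀ x ∈ K, 0 < (1 + t • fderiv ℝ W x).det := by
  have hJ : Continuous fun p : ℝ × E => (1 + p.1 • fderiv ℝ W p.2).det :=
    ContinuousLinearMap.continuous_det.comp
      (continuous_const.add (continuous_fst.smul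
        ((hW.continuous_fderiv one_ne_zero).comp continuous_snd)))
  exact hK.eventually_forall_of_forall_eventually fun x _ =>
    continuousAt_const.eventually_lt hJ.continuousAt (by simp [ContinuousLinearMap.det])

variable [FiniteDimensional ℝ E] [MeasurableSpace E] [BorelSpace E]

theorem setIntegral_image_add_smul (μ : Measure E) [μ.IsAddHaarMeasure] {W : E → E}
    (hW : Differentiable ℝ W) {Δ : Set E} (hΔm : MeasurableSet Δ) {t : ℝ}
    (hinj : InjOn (fun x => x + t • W x) Δ) (hpos : ∀ x ∈ Δ, 0 < (1 + t • fderiv ℝ W x).det)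
    (g : E → F) :
    ∫ y in (fun x => x + t • W x) '' Δ, g y ∂μ
      = ∫ x in Δ, (1 + t • fderiv ℝ W x).det • g (x + t • W x) ∂μ := by
  have hF : ∀ x, HasFDerivAt (fun x => x + t • W x) (1 + t • fderiv ℝ W x) x := fun x =>
    (hasFDerivAt_id x).add ((hW x).hasFDerivAt.const_smul t)
  rw [integral_image_eq_integral_abs_det_fderiv_smul μ hΔm (fun x _ => (hF x).hasFDerivWithinAt)
    hinj]
  exact setIntegral_congr_fun hΔm fun x hx => by rw [abs_of_pos (hpos x hx)]

theorem hasDerivAt_integral_image_add_smul (μ : Measure E) [μ.IsAddHaarMeasure] {W : E → E}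
    (hW : ContDiff ℝ 1 W) {Δ : Set E} (hΔm : MeasurableSet Δ) (hΔb : Bornology.IsBounded Δ)
    {f : ℝ × E → ℝ} (hf : ContDiff ℝ 1 f) :
    HasDerivAt (fun t => ∫ y in (fun x => x + t • W x) '' Δ, f (t, y) ∂μ)
      (∫ x in Δ, (fderiv ℝ f (0, x) (1, W x)
        + LinearMap.trace ℝ E (fderiv ℝ W x) * f (0, x)) ∂μ) 0 := by
  have hK : IsCompact (closure Δ) := hΔb.isCompact_closure
  have hdet : ContDiff ℝ 1 (fun A : E →L[ℝ] E => A.det) := ContinuousLinearMap.contDiff_det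
  set G : ℝ → E → ℝ := fun t x => (1 + t • fderiv ℝ W x).det * f (t, x + t • W x)
  set G' : ℝ → E → ℝ := fun t x =>
    fderiv ℝ (fun A : E →L[ℝ] E => A.det) (1 + t • fderiv ℝ W x) (fderiv ℝ W x)
        * f (t, x + t • W x)
      + (1 + t • fderiv ℝ W x).det * fderiv ℝ f (t, x + t • W x) (1, W x)
  have hA : Continuous fun p : ℝ × E => 1 + p.1 • fderiv ℝ W p.2 := by
    have := hW.continuous_fderiv one_ne_zero
    fun_prop
  have hDf := hf.continuous_fderiv one_ne_zero
  have hJ := ContinuousLinearMap.continuous_det.comp hA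
  have hDJ := (hdet.continuous_fderiv one_ne_zero).comp hA
  have hGc : Continuous (Function.uncurry G) := by
    simp only [G, Function.uncurry_def]
    fun_prop
  have hG'c : Continuous (Function.uncurry G') := by
    simp only [G', Function.uncurry_def]
    fun_prop
  have hder : ∀ t x, HasDerivAt (G · x) (G' t x) t := fun t x => by
    have hline : HasDerivAt (fun s : ℝ => 1 + s • fderiv ℝ W x) (fderiv ℝ W x) t := by
      simpa using ((hasDerivAt_id t).smul_const (fderiv ℝ W x)).const_add 1
    exact ((hdet.differentiable one_ne_zero _).hasFDerivAt.comp_hasDerivAt t hline).mul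
      (hasDerivAt_comp_add_smul (hf.differentiable one_ne_zero _))
  have hcov : (fun t => ∫ y in (fun x => x + t • W x) '' Δ, f (t, y) ∂μ)
      =ᶠ[𝓝 0] fun t => ∫ x in Δ, G t x ∂μ := by
    filter_upwards [hW.eventually_injOn_add_smul hK, hW.eventually_forall_det_pos hK]
      with t hinj hpos
    exact setIntegral_image_add_smul μ (hW.differentiable one_ne_zero) hΔm
      (hinj.mono subset_closure) (fun x hx => hpos x (subset_closure hx)) _
  have hval : ∀ x, G' 0 x
      = fderiv ℝ f (0, x) (1, W x) + LinearMap.trace ℝ E (fderiv ℝ W x) * f (0, x) := by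
    simp [G', ContinuousLinearMap.fderiv_det_one_apply, ContinuousLinearMap.det, add_comm]
  simp_rw [← hval]
  exact (hasDerivAt_setIntegral_of_continuous_deriv hK hΔm subset_closure hGc hG'c hder 0)
    |>.congr_of_eventuallyEq hcov

end Transport

section Convective

variable {E : Type*} [NormedAddCommGroup E] [InnerProductSpace ℝ E]

/-- The integrand `((v · ∇) v) · φ` at `p = (t, y)`: `fderiv ℝ v p (0, a)` is the spatial
derivative `(a · ∇) v(t, ·)` at `y`. -/
noncomputable def convectiveTerm (v φ : ℝ × E → E) (p : ℝ × E) : ℝ :=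
  ⟪fderiv ℝ v p (0, v p), φ p⟫

theorem contDiff_convectiveTerm {v φ : ℝ × E → E} (hv : ContDiff ℝ 2 v) (hφ : ContDiff ℝ 1 φ) :
    ContDiff ℝ 1 (convectiveTerm v φ) :=
  ((hv.fderiv_right (by norm_num)).clm_apply
    (contDiff_const.prodMk (hv.of_le one_le_two))).inner ℝ hφ

theorem fderiv_convectiveTerm_apply {v φ : ℝ × E → E} (hv : ContDiff ℝ 2 v)
    (hφ : Differentiable ℝ φ) (p q : ℝ × E) :
    fderiv ℝ (convectiveTerm v φ) p q
      = ⟪fderiv ℝ (fderiv ℝ v) p q (0, v p) + fderiv ℝ v p (0, fderiv ℝ v p q), φ p⟫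
        + ⟪fderiv ℝ v p (0, v p), fderiv ℝ φ p q⟫ := by
  have hD2v : HasFDerivAt (fderiv ℝ v) (fderiv ℝ (fderiv ℝ v) p) p :=
    ((hv.fderiv_right (by norm_num)).differentiable one_ne_zero _).hasFDerivAt
  have hvp : HasFDerivAt (fun p => ((0 : ℝ), v p))
      ((0 : ℝ × E →L[ℝ] ℝ).prod (fderiv ℝ v p)) p :=
    (hasFDerivAt_const 0 p).prodMk ((hv.differentiable two_ne_zero) p).hasFDerivAt
  have hterm : HasFDerivAt (convectiveTerm v φ) _ p :=
    (hD2v.clm_apply hvp).inner ℝ (hφ p).hasFDerivAt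
  rw [hterm.fderiv]
  simp [fderivInnerCLM_apply, add_comm]

end Convective

section Plane

local notation "ℝ²" => EuclideanSpace ℝ (Fin 2)

theorem conv_eq_fderiv_apply {v : ℝ × ℝ² → ℝ²} (hv : Differentiable ℝ v) (a : ℝ²) (t : ℝ)
    (y : ℝ²) : conv a (fun z => v (t, z)) y = fderiv ℝ v (t, y) (0, a) := by
  have hslice : HasFDerivAt (fun z => v (t, z))
      ((fderiv ℝ v (t, y)).comp (ContinuousLinearMap.inr ℝ ℝ ℝ²)) y :=
    (hv _).hasFDerivAt.comp y (hasFDerivAt_prodMk_right t y)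
  rw [conv, hslice.fderiv]
  rfl

theorem divg_eq_trace (W : ℝ² → ℝ²) (x : ℝ²) :
    divg W x = LinearMap.trace ℝ ℝ² (fderiv ℝ W x) := by
  rw [divg, LinearMap.trace_eq_matrix_trace ℝ (EuclideanSpace.basisFun (Fin 2) ℝ).toBasis]
  congr 1

theorem fderiv_convectiveTerm_apply_material
    {v φ : ℝ × EuclideanSpace ℝ (Fin 2) → EuclideanSpace ℝ (Fin 2)}
    (hv : ContDiff ℝ 2 v) (hφ : Differentiable ℝ φ)
    {W v₀ vdot φ₀ φdot : EuclideanSpace ℝ (Fin 2) → EuclideanSpace ℝ (Fin 2)}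
    (hW : Differentiable ℝ W)
    (hv₀ : v₀ = fun z => v ((0 : ℝ), z))
    (hvdot : vdot = fun z => deriv (fun t : ℝ => v (t, z + t • W z)) 0)
    (hφ₀ : φ₀ = fun z => φ ((0 : ℝ), z))
    (hφdot : φdot = fun z => deriv (fun t : ℝ => φ (t, z + t • W z)) 0)
    (x : EuclideanSpace ℝ (Fin 2)) :
    fderiv ℝ (convectiveTerm v φ) (0, x) (1, W x)
      = ⟪conv (vdot x) v₀ x, φ₀ x⟫ + ⟪conv (v₀ x) vdot x, φ₀ x⟫
        - ⟪conv (conv (v₀ x) W x) v₀ x, φ₀ x⟫ + ⟪conv (v₀ x) v₀ x, φdot x⟫ := by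
  have hvd : Differentiable ℝ v := hv.differentiable two_ne_zero
  simp_rw [deriv_comp_add_smul_zero hvd, deriv_comp_add_smul_zero hφ] at hvdot hφdot
  subst hv₀ hvdot hφ₀ hφdot
  rw [fderiv_convectiveTerm_apply hv hφ, fderiv_fderiv_apply_eq_fderiv_sub hv (hW x)]
  simp only [conv_eq_fderiv_apply hvd]
  simp only [conv, inner_add_left, inner_sub_left]
  ring

end Plane

theorem shape_derivative_L3_general
    (W : EuclideanSpace ℝ (Fin 2) → EuclideanSpace ℝ (Fin 2))
    (hW : ContDiff ℝ 1 W)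
    (Δ : Set (EuclideanSpace ℝ (Fin 2))) (hΔm : MeasurableSet Δ)
    (hΔb : Bornology.IsBounded Δ)
    (v φ : ℝ × EuclideanSpace ℝ (Fin 2) → EuclideanSpace ℝ (Fin 2))
    (hv : ContDiff ℝ 2 v) (hφ : ContDiff ℝ 2 φ)
    (v₀ vdot φ₀ φdot : EuclideanSpace ℝ (Fin 2) → EuclideanSpace ℝ (Fin 2))
    (hv₀ : v₀ = fun z => v ((0 : ℝ), z))
    (hvdot : vdot = fun z => deriv (fun t : ℝ => v (t, z + t • W z)) 0)
    (hφ₀ : φ₀ = fun z => φ ((0 : ℝ), z))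
    (hφdot : φdot = fun z => deriv (fun t : ℝ => φ (t, z + t • W z)) 0) :
    HasDerivAt
      (fun t : ℝ => ∫ y in (fun x => x + t • W x) '' Δ,
        ⟪conv (v (t, y)) (fun z => v (t, z)) y, φ (t, y)⟫)
      (∫ x in Δ,
        (⟪conv (vdot x) v₀ x, φ₀ x⟫
          + ⟪conv (v₀ x) vdot x, φ₀ x⟫
          - ⟪conv (conv (v₀ x) W x) v₀ x, φ₀ x⟫
          + ⟪conv (v₀ x) v₀ x, φdot x⟫
          + divg W x * ⟪conv (v₀ x) v₀ x, φ₀ x⟫)) (0 : ℝ) := by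
  have hvd : Differentiable ℝ v := hv.differentiable two_ne_zero
  have hφd : Differentiable ℝ φ := hφ.differentiable two_ne_zero
  have hintegrand : ∀ t y, ⟪conv (v (t, y)) (fun z => v (t, z)) y, φ (t, y)⟫
      = convectiveTerm v φ (t, y) := fun t y => by
    rw [conv_eq_fderiv_apply hvd]
    rfl
  have hterm₀ : ∀ x, ⟪conv (v₀ x) v₀ x, φ₀ x⟫ = convectiveTerm v φ (0, x) := by
    subst hv₀ hφ₀
    exact hintegrand 0
  simp_rw [hintegrand]
  convert hasDerivAt_integral_image_add_smul volume hW hΔm hΔb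
    (contDiff_convectiveTerm hv (hφ.of_le one_le_two)) using 1
  refine setIntegral_congr_fun hΔm fun x _ => ?_
  rw [fderiv_convectiveTerm_apply_material hv hφd (hW.differentiable one_ne_zero) hv₀ hvdot hφ₀
    hφdot x, divg_eq_trace, hterm₀]

/-- Shape derivative of the convective term
`t ↦ ∫_{F_t(Δ)} ((v(t,·) · ∇) v(t,·)) · φ(t,·) dy`. -/
theorem shape_derivative_L3
    (W : EuclideanSpace ℝ (Fin 2) → EuclideanSpace ℝ (Fin 2))
    (hW : ContDiff ℝ 1 W) (hWc : HasCompactSupport W)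
    (Δ : Set (EuclideanSpace ℝ (Fin 2))) (hΔm : MeasurableSet Δ)
    (hΔb : Bornology.IsBounded Δ)
    (v φ : ℝ × EuclideanSpace ℝ (Fin 2) → EuclideanSpace ℝ (Fin 2))
    (hv : ContDiff ℝ 2 v) (hφ : ContDiff ℝ 2 φ)
    (v₀ vdot φ₀ φdot : EuclideanSpace ℝ (Fin 2) → EuclideanSpace ℝ (Fin 2))
    (hv₀ : v₀ = fun z => v ((0 : ℝ), z))
    (hvdot : vdot = fun z => deriv (fun t : ℝ => v (t, z + t • W z)) 0)
    (hφ₀ : φ₀ = fun z => φ ((0 : ℝ), z))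
    (hφdot : φdot = fun z => deriv (fun t : ℝ => φ (t, z + t • W z)) 0) :
    HasDerivAt
      (fun t : ℝ => ∫ y in (fun x => x + t • W x) '' Δ,
        ⟪conv (v (t, y)) (fun z => v (t, z)) y, φ (t, y)⟫)
      (∫ x in Δ,
        (⟪conv (vdot x) v₀ x, φ₀ x⟫
          + ⟪conv (v₀ x) vdot x, φ₀ x⟫
          - ⟪conv (conv (v₀ x) W x) v₀ x, φ₀ x⟫
          + ⟪conv (v₀ x) v₀ x, φdot x⟫
          + divg W x * ⟪conv (v₀ x) v₀ x, φ₀ x⟫)) (0 : ℝ) :=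
  shape_derivative_L3_general W hW Δ hΔm hΔb v φ hv hφ v₀ vdot φ₀ φdot hv₀ hvdot hφ₀ hφdot
end
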